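/- For every real λ > 0 and every s ∈ (0,1), λ^{-s} = (2 sin(πs)/π) ∫_{-∞}^{+∞} e^{2sy} (1 + e^{2y} λ)^{-1} dy. -/

import Mathlib

/-!
Substituting `u = 2y + log λ` turns the integral into `λ^{-s}/2 · ∫ e^{su} / (1 + e^u) du`, and the
sigmoid substitution `t = e^u / (1 + e^u)` maps this onto the Beta integral
`B(s, 1 - s) = Γ(s) Γ(1 - s) = π / sin(πs)`.
-/

open Real MeasureTheory Set

theorem integral_Ioo_rpow_mul_one_sub_rpow {a b : ℝ} (ha : 0 < a) (hb : 0 < b) :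
    ∫ t in Ioo (0 : ℝ) 1, t ^ (a - 1) * (1 - t) ^ (b - 1) = Gamma a * Gamma b / Gamma (a + b) := by
  have hbeta := Complex.betaIntegral_eq_Gamma_mul_div a b (by simpa) (by simpa)
  rw [Complex.betaIntegral, intervalIntegral.integral_of_le zero_le_one,
    integral_Ioc_eq_integral_Ioo, ← Complex.ofReal_add, Complex.Gamma_ofReal,
    Complex.Gamma_ofReal, Complex.Gamma_ofReal] at hbeta
  rw [← Complex.ofReal_inj, ← integral_complex_ofReal]
  push_cast
  rw [← hbeta]
  refine setIntegral_congr_fun measurableSet_Ioo fun t ht => ?_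
  rw [Complex.ofReal_cpow ht.1.le, Complex.ofReal_cpow (sub_pos.2 ht.2).le]
  push_cast
  rfl

theorem sigmoid_rpow_mul_one_sub_sigmoid_rpow (a b u : ℝ) :
    sigmoid u ^ a * (1 - sigmoid u) ^ b = exp (a * u) * (1 + exp u) ^ (-(a + b)) := by
  have hσ : sigmoid u = exp u * sigmoid (-u) := by
    rw [← sigmoid_mul_rexp_neg, exp_neg]
    field_simp
  rw [← sigmoid_neg, hσ, mul_rpow (exp_pos u).le (sigmoid_nonneg _), mul_assoc,
    ← rpow_add (sigmoid_pos _), ← exp_mul, mul_comm u, sigmoid_def, neg_neg,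
    inv_rpow (by positivity), ← rpow_neg (by positivity)]

theorem integral_exp_mul_mul_one_add_exp_rpow {a b : ℝ} (ha : 0 < a) (hb : 0 < b) :
    ∫ u, exp (a * u) * (1 + exp u) ^ (-(a + b)) = Gamma a * Gamma b / Gamma (a + b) := by
  have hcov := integral_image_eq_integral_abs_deriv_smul MeasurableSet.univ
    (fun u _ => (hasDerivAt_sigmoid u).hasDerivWithinAt) sigmoid_injective.injOn
    (fun t => t ^ (a - 1) * (1 - t) ^ (b - 1))
  rw [image_univ, range_sigmoid, setIntegral_univ,
    integral_Ioo_rpow_mul_one_sub_rpow ha hb] at hcov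
  rw [hcov]
  congr 1 with u
  have h0 := sigmoid_pos u
  have h1 : 0 < 1 - sigmoid u := sub_pos.2 (sigmoid_lt_one u)
  rw [← sigmoid_rpow_mul_one_sub_sigmoid_rpow, smul_eq_mul, abs_of_pos (mul_pos h0 h1),
    rpow_sub_one h0.ne', rpow_sub_one h1.ne']
  field_simp

theorem integral_exp_mul_mul_one_add_exp_inv {s : ℝ} (hs : s ∈ Ioo (0 : ℝ) 1) :
    ∫ u, exp (s * u) * (1 + exp u)⁻¹ = π / sin (π * s) := by
  have h := integral_exp_mul_mul_one_add_exp_rpow hs.1 (sub_pos.2 hs.2)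
  rw [add_sub_cancel, Gamma_one, div_one, Gamma_mul_Gamma_one_sub] at h
  simpa only [rpow_neg_one] using h

theorem integral_comp_mul_add {F : Type*} [NormedAddCommGroup F] [NormedSpace ℝ F]
    (g : ℝ → F) (c d : ℝ) : ∫ x, g (c * x + d) = |c⁻¹| • ∫ x, g x := by
  rw [Measure.integral_comp_mul_left (fun x => g (x + d)), integral_add_right_eq_self]

theorem balakrishnan_formula (lam s : ℝ) (hlam : 0 < lam) (hs : s ∈ Set.Ioo (0:ℝ) 1) :
    lam ^ (-s) =
      (2 * Real.sin (Real.pi * s) / Real.pi) *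
        ∫ y : ℝ, Real.exp (2 * s * y) * (1 + Real.exp (2 * y) * lam)⁻¹ := by
  have hsin : sin (π * s) ≠ 0 :=
    (sin_pos_of_pos_of_lt_pi (by nlinarith [pi_pos, hs.1]) (by nlinarith [pi_pos, hs.2])).ne'
  have hshift : ∀ y, exp (2 * s * y) * (1 + exp (2 * y) * lam)⁻¹
      = lam ^ (-s) * (exp (s * (2 * y + log lam)) * (1 + exp (2 * y + log lam))⁻¹) := by
    intro y
    rw [mul_add, exp_add (s * _), mul_comm s (log lam), ← rpow_def_of_pos hlam, exp_add (2 * y),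
      exp_log hlam, rpow_neg hlam.le, show s * (2 * y) = 2 * s * y by ring]
    field_simp
  simp_rw [hshift]
  rw [integral_const_mul, integral_comp_mul_add (fun u => exp (s * u) * (1 + exp u)⁻¹),
    integral_exp_mul_mul_one_add_exp_inv hs, smul_eq_mul, abs_of_pos (by norm_num : (0 : ℝ) < 2⁻¹)]
  generalize sin (π * s) = c at hsin ⊢
  field_simp
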